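/- The complete first-order theory of the structure (ℝ; (f_s)_{s∈ℚ}, (R_r)_{r∈ℚ⁺}) admits quantifier elimination: for every L₁-formula φ(x₁,…,x_n) there is a quantifier-free L₁-formula ψ(x₁,…,x_n) such that φ and ψ are equivalent modulo Th(ℝ), i.e. ℝ ⊨ ∀x̄ (φ(x̄) ↔ ψ(x̄)) and the equivalence holds in every model of Th(ℝ). -/

import Mathlib

open FirstOrder

universe w

/-- The language `L₁` with a unary function symbol `f_s` for every rational `s` and a binary
relation symbol `R_r` for every positive rational `r`. -/
def L1 : FirstOrder.Language where
  Functions n := match n with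
    | 1 => ℚ
    | _ => Empty
  Relations n := match n with
    | 2 => {r : ℚ // 0 < r}
    | _ => Empty

/-- `ℝ` as an `L₁`-structure: `f_s` is the translation `x ↦ x + s` and `R_r(x,y)` holds iff
`0 ≤ y − x ≤ r`. -/
noncomputable instance realL1Structure : L1.Structure ℝ where
  funMap {n} f x :=
    match n, f with
    | 1, s => x 0 + ((id s : ℚ) : ℝ)
  RelMap {n} r x :=
    match n, r with
    | 2, r => 0 ≤ x 1 - x 0 ∧ x 1 - x 0 ≤ ((Subtype.val r : ℚ) : ℝ)



namespace QE1


variable {γ : Type*} {δ : Type*}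

structure Lit (γ : Type*) where
  pos : Bool
  i : γ
  j : γ
  lo : ℚ
  hi : ℚ

def Lit.Val (l : Lit γ) (x : γ → ℝ) : Prop :=
  (l.lo : ℝ) ≤ x l.j - x l.i ∧ x l.j - x l.i ≤ (l.hi : ℝ)

def Lit.Sat (l : Lit γ) (x : γ → ℝ) : Prop := if l.pos then l.Val x else ¬ l.Val x

def Lit.neg (l : Lit γ) : Lit γ := ⟨!l.pos, l.i, l.j, l.lo, l.hi⟩

lemma Lit.sat_neg (l : Lit γ) (x : γ → ℝ) : l.neg.Sat x ↔ ¬ l.Sat x := by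
  cases hb : l.pos <;> simp [Lit.Sat, Lit.neg, Lit.Val, hb]

def Lit.relabel (f : γ → δ) (l : Lit γ) : Lit δ := ⟨l.pos, f l.i, f l.j, l.lo, l.hi⟩

lemma Lit.sat_relabel (f : γ → δ) (l : Lit γ) (y : δ → ℝ) :
    (l.relabel f).Sat y ↔ l.Sat (y ∘ f) := Iff.rfl

abbrev Dnf (γ : Type*) := List (List (Lit γ))

def CSat (c : List (Lit γ)) (x : γ → ℝ) : Prop := ∀ l ∈ c, l.Sat x
def DSat (D : Dnf γ) (x : γ → ℝ) : Prop := ∃ c ∈ D, CSat c x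

def dOr (D₁ D₂ : Dnf γ) : Dnf γ := D₁ ++ D₂
def dAnd (D₁ D₂ : Dnf γ) : Dnf γ := D₁.flatMap fun c => D₂.map (c ++ ·)
def dLit (l : Lit γ) : Dnf γ := [ [l] ]
def dTrue : Dnf γ := [ [] ]
def dFalse : Dnf γ := []
def dAll {ι : Type*} (L : List ι) (f : ι → Dnf γ) : Dnf γ :=
  L.foldr (fun i D => dAnd (f i) D) dTrue
def dAny {ι : Type*} (L : List ι) (f : ι → Dnf γ) : Dnf γ :=
  L.foldr (fun i D => dOr (f i) D) dFalse
def dNot (D : Dnf γ) : Dnf γ :=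
  D.foldr (fun c D' => dAnd (dAny c (fun l => dLit l.neg)) D') dTrue

variable {x : γ → ℝ}

lemma csat_append {c₁ c₂ : List (Lit γ)} :
    CSat (c₁ ++ c₂) x ↔ CSat c₁ x ∧ CSat c₂ x := by
  simp [CSat, or_imp, forall_and]

@[simp] lemma dsat_or {D₁ D₂ : Dnf γ} : DSat (dOr D₁ D₂) x ↔ DSat D₁ x ∨ DSat D₂ x := by
  simp [DSat, dOr, or_and_right, exists_or]

@[simp] lemma dsat_and {D₁ D₂ : Dnf γ} : DSat (dAnd D₁ D₂) x ↔ DSat D₁ x ∧ DSat D₂ x := by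
  constructor
  · rintro ⟨c, hc, hsat⟩
    simp only [dAnd, List.mem_flatMap, List.mem_map] at hc
    obtain ⟨c₁, h₁, c₂, h₂, rfl⟩ := hc
    rw [csat_append] at hsat
    exact ⟨⟨c₁, h₁, hsat.1⟩, ⟨c₂, h₂, hsat.2⟩⟩
  · rintro ⟨⟨c₁, h₁, hs₁⟩, ⟨c₂, h₂, hs₂⟩⟩
    refine ⟨c₁ ++ c₂, ?_, csat_append.2 ⟨hs₁, hs₂⟩⟩
    simp only [dAnd, List.mem_flatMap, List.mem_map]
    exact ⟨c₁, h₁, c₂, h₂, rfl⟩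

@[simp] lemma dsat_lit {l : Lit γ} : DSat (dLit l) x ↔ l.Sat x := by
  simp [DSat, dLit, CSat]

@[simp] lemma dsat_true : DSat (dTrue : Dnf γ) x ↔ True := by simp [DSat, dTrue, CSat]

@[simp] lemma dsat_false : DSat (dFalse : Dnf γ) x ↔ False := by simp [DSat, dFalse]

@[simp] lemma dsat_all {ι : Type*} {L : List ι} {f : ι → Dnf γ} :
    DSat (dAll L f) x ↔ ∀ i ∈ L, DSat (f i) x := by
  induction L with
  | nil => simp [dAll, dTrue, DSat, CSat]
  | cons a L ih => simp [dAll, List.foldr_cons] at ih ⊢; simp [ih]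

@[simp] lemma dsat_any {ι : Type*} {L : List ι} {f : ι → Dnf γ} :
    DSat (dAny L f) x ↔ ∃ i ∈ L, DSat (f i) x := by
  induction L with
  | nil => simp [dAny, dFalse, DSat]
  | cons a L ih => simp [dAny, List.foldr_cons] at ih ⊢; simp [ih]

@[simp] lemma dsat_not {D : Dnf γ} : DSat (dNot D) x ↔ ¬ DSat D x := by
  induction D with
  | nil => simp [dNot, dTrue, DSat, CSat]
  | cons c D ih =>
    have : dNot (c :: D) = dAnd (dAny c (fun l => dLit l.neg)) (dNot D) := rfl
    rw [this, dsat_and, ih]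
    simp only [dsat_any, dsat_lit, Lit.sat_neg]
    constructor
    · rintro ⟨⟨l, hl, hn⟩, hD⟩ ⟨c', hc', hs⟩
      rcases List.mem_cons.1 hc' with rfl | hc'
      · exact hn (hs l hl)
      · exact hD ⟨c', hc', hs⟩
    · intro h
      constructor
      · by_contra hcon
        push_neg at hcon
        exact h ⟨c, List.mem_cons_self, fun l hl => hcon l hl⟩
      · intro ⟨c', hc', hs⟩; exact h ⟨c', List.mem_cons_of_mem _ hc', hs⟩



variable {γ : Type*}

abbrev Iv (γ : Type*) := γ × ℚ × ℚ

def ivA (x : γ → ℝ) (p : Iv γ) : ℝ := x p.1 + (p.2.1 : ℝ)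
def ivB (x : γ → ℝ) (p : Iv γ) : ℝ := x p.1 + (p.2.2 : ℝ)
def Mem (x : γ → ℝ) (a : ℝ) (p : Iv γ) : Prop := ivA x p ≤ a ∧ a ≤ ivB x p

lemma exists_max_mem {ι : Type*} (L : List ι) (h : L ≠ []) (f : ι → ℝ) :
    ∃ a ∈ L, ∀ b ∈ L, f b ≤ f a := by
  induction L with
  | nil => exact absurd rfl h
  | cons a L ih =>
    rcases eq_or_ne L [] with rfl | hL
    · exact ⟨a, List.mem_cons_self, by simp⟩
    · obtain ⟨m, hm, hmax⟩ := ih hL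
      rcases le_total (f m) (f a) with hc | hc
      · refine ⟨a, List.mem_cons_self, fun b hb => ?_⟩
        rcases List.mem_cons.1 hb with rfl | hb
        · exact le_refl _
        · exact (hmax b hb).trans hc
      · refine ⟨m, List.mem_cons_of_mem _ hm, fun b hb => ?_⟩
        rcases List.mem_cons.1 hb with rfl | hb
        · exact hc
        · exact hmax b hb

lemma exists_between_list (t : ℝ) (L : List ℝ) (h : ∀ u ∈ L, t < u) :
    ∃ a, t < a ∧ ∀ u ∈ L, a < u := by
  induction L with
  | nil => exact ⟨t + 1, by linarith, by simp⟩
  | cons u L ih =>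
    obtain ⟨a, ha, hL⟩ := ih (fun u hu => h u (List.mem_cons_of_mem _ hu))
    have hu : t < u := h u (List.mem_cons_self)
    refine ⟨min a ((t + u) / 2), by simp [ha]; linarith, fun u' hu' => ?_⟩
    rcases List.mem_cons.1 hu' with rfl | hu'
    · exact lt_of_le_of_lt (min_le_right _ _) (by linarith)
    · exact lt_of_le_of_lt (min_le_left _ _) (hL u' hu')

/-- The analytic core: a characterization of when the intersection of a nonempty finite family
of closed intervals minus a finite union of closed intervals is nonempty. -/
theorem ne_char (x : γ → ℝ) (p₀ : Iv γ) (P Q : List (Iv γ)) :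
    (∃ a, (∀ p ∈ p₀ :: P, Mem x a p) ∧ (∀ q ∈ Q, ¬ Mem x a q)) ↔
      ((∃ p ∈ p₀ :: P, (∀ p' ∈ p₀ :: P, ivA x p' ≤ ivA x p) ∧
          (∀ p' ∈ p₀ :: P, ivA x p ≤ ivB x p') ∧ ∀ q ∈ Q, ¬ Mem x (ivA x p) q) ∨
        (∃ q ∈ Q, (∀ p ∈ p₀ :: P, ivA x p ≤ ivB x q) ∧
          (∀ p ∈ p₀ :: P, ivB x q < ivB x p) ∧
          ∀ q' ∈ Q, (ivB x q < ivA x q' ∨ ivB x q' ≤ ivB x q)) ∨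
        (∃ q ∈ Q, (∀ p ∈ p₀ :: P, Mem x (ivB x q) p) ∧
          ∀ q' ∈ Q, ¬ Mem x (ivB x q) q')) := by
  classical
  constructor
  · rintro ⟨a, hP, hQ⟩
    by_cases h3 : ∃ q ∈ Q, ivB x q = a
    · obtain ⟨q, hq, hqa⟩ := h3
      refine Or.inr (Or.inr ⟨q, hq, ?_, ?_⟩) <;> rw [hqa]
      · exact hP
      · exact hQ
    · push_neg at h3
      by_cases h2 : ∃ q ∈ Q, ivB x q < a ∧ ∀ p ∈ p₀ :: P, ivA x p ≤ ivB x q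
      · -- pick such q with maximal right endpoint
        set Qf := Q.filter (fun q => decide (ivB x q < a ∧ ∀ p ∈ p₀ :: P, ivA x p ≤ ivB x q))
          with hQf
        have hne : Qf ≠ [] := by
          obtain ⟨q, hq, hprop⟩ := h2
          intro hnil
          have : q ∈ Qf := by
            rw [hQf, List.mem_filter]
            exact ⟨hq, by simpa using hprop⟩
          rw [hnil] at this
          exact absurd this (List.not_mem_nil)
        obtain ⟨q, hqQf, hqmax⟩ := exists_max_mem Qf hne (ivB x)
        have hqQ : q ∈ Q := (List.mem_filter.1 hqQf).1
        have hqprop : ivB x q < a ∧ ∀ p ∈ p₀ :: P, ivA x p ≤ ivB x q := by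
          have := (List.mem_filter.1 hqQf).2
          simpa using this
        refine Or.inr (Or.inl ⟨q, hqQ, hqprop.2, ?_, ?_⟩)
        · intro p hp
          exact lt_of_lt_of_le hqprop.1 (hP p hp).2
        · intro q' hq'
          by_contra hcon
          push_neg at hcon
          obtain ⟨hc1, hc2⟩ := hcon
          rcases lt_trichotomy (ivB x q') a with hlt | heq | hgt
          · have : q' ∈ Qf := by
              rw [hQf, List.mem_filter]
              refine ⟨hq', ?_⟩
              simp only [decide_eq_true_eq]
              exact ⟨hlt, fun p hp => le_of_lt (lt_of_le_of_lt (hqprop.2 p hp) hc2)⟩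
            exact absurd (hqmax q' this) (not_le.2 hc2)
          · exact h3 q' hq' heq
          · exact hQ q' hq' ⟨le_of_lt (lt_of_le_of_lt hc1 hqprop.1), le_of_lt hgt⟩
      · push_neg at h2
        obtain ⟨p, hpP, hpmax⟩ := exists_max_mem (p₀ :: P) (List.cons_ne_nil _ _) (ivA x)
        refine Or.inl ⟨p, hpP, hpmax, fun p' hp' => le_trans (hP p hpP).1 (hP p' hp').2,
          fun q hq => ?_⟩
        rintro ⟨hc, hd⟩
        rcases lt_trichotomy (ivB x q) a with hlt | heq | hgt
        · obtain ⟨p', hp', hbad⟩ := h2 q hq hlt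
          exact absurd (le_trans (hpmax p' hp') hd) (not_le.2 hbad)
        · exact h3 q hq heq
        · exact hQ q hq ⟨le_trans hc (hP p hpP).1, le_of_lt hgt⟩
  · rintro (⟨p, hpP, hmax, hle, hQ⟩ | ⟨q, hqQ, hAle, hBlt, hsep⟩ | ⟨q, hqQ, hP, hQ⟩)
    · exact ⟨ivA x p, fun p' hp' => ⟨hmax p' hp', hle p' hp'⟩, hQ⟩
    · -- witness slightly to the right of ivB x q
      set L := ((p₀ :: P).map (ivB x)) ++
        ((Q.filter (fun q' => decide (ivB x q < ivA x q'))).map (ivA x)) with hL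
      have hgt : ∀ u ∈ L, ivB x q < u := by
        intro u hu
        rw [hL] at hu
        rcases List.mem_append.1 hu with hu | hu
        · obtain ⟨p', hp', rfl⟩ := List.mem_map.1 hu
          exact hBlt p' hp'
        · obtain ⟨q', hq', rfl⟩ := List.mem_map.1 hu
          have := (List.mem_filter.1 hq').2
          simpa using this
      obtain ⟨a, ha, haL⟩ := exists_between_list _ L hgt
      refine ⟨a, fun p' hp' => ⟨le_of_lt (lt_of_le_of_lt (hAle p' hp') ha), ?_⟩,
        fun q' hq' => ?_⟩
      · refine le_of_lt (haL _ ?_)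
        rw [hL]
        exact List.mem_append.2 (Or.inl (List.mem_map.2 ⟨p', hp', rfl⟩))
      · rintro ⟨hc, hd⟩
        rcases hsep q' hq' with hsep1 | hsep2
        · have : a < ivA x q' := by
            refine haL _ ?_
            rw [hL]
            refine List.mem_append.2 (Or.inr (List.mem_map.2 ⟨q', ?_, rfl⟩))
            rw [List.mem_filter]
            exact ⟨hq', by simpa using hsep1⟩
          linarith
        · linarith
    · exact ⟨ivB x q, hP, hQ⟩


section Elim
variable {γ : Type*} [DecidableEq γ]

def extOpt (x : γ → ℝ) (a : ℝ) : Option γ → ℝ := fun o => o.elim a x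

/-- Parse a clause over `Option γ` into context literals, positive intervals `P` and removed
intervals `Q` for the existential variable; `none` if a constant-false literal occurs. -/
def parse : List (Lit (Option γ)) → Option (List (Lit γ) × List (Iv γ) × List (Iv γ))
  | [] => some ([], [], [])
  | l :: c => (parse c).bind fun r =>
    match l.i, l.j with
    | some i, some j => some (⟨l.pos, i, j, l.lo, l.hi⟩ :: r.1, r.2.1, r.2.2)
    | none, none =>
        if l.pos = decide (l.lo ≤ 0 ∧ 0 ≤ l.hi) then some r else none
    | some i, none =>
        if l.pos then some (r.1, (i, l.lo, l.hi) :: r.2.1, r.2.2)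
        else some (r.1, r.2.1, (i, l.lo, l.hi) :: r.2.2)
    | none, some j =>
        if l.pos then some (r.1, (j, -l.hi, -l.lo) :: r.2.1, r.2.2)
        else some (r.1, r.2.1, (j, -l.hi, -l.lo) :: r.2.2)

set_option maxHeartbeats 2000000 in
lemma parse_correct (c : List (Lit (Option γ))) (x : γ → ℝ) (a : ℝ) :
    (parse c = none → ¬ CSat c (extOpt x a)) ∧
    (∀ ctx P Q, parse c = some (ctx, P, Q) →
      (CSat c (extOpt x a) ↔
        CSat ctx x ∧ (∀ p ∈ P, Mem x a p) ∧ (∀ q ∈ Q, ¬ Mem x a q))) := by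
  induction c with
  | nil =>
    constructor
    · intro h; simp [parse] at h
    · intro ctx P Q h
      simp only [parse, Option.some.injEq, Prod.mk.injEq] at h
      obtain ⟨rfl, rfl, rfl⟩ := h
      simp [CSat]
  | cons l c ih =>
    have hval : l.Val (extOpt x a) ↔
        ((l.lo : ℝ) ≤ (extOpt x a) l.j - (extOpt x a) l.i ∧
          (extOpt x a) l.j - (extOpt x a) l.i ≤ (l.hi : ℝ)) := Iff.rfl
    have hcsat : CSat (l :: c) (extOpt x a) ↔ l.Sat (extOpt x a) ∧ CSat c (extOpt x a) := by
      simp [CSat]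
    rcases hp : parse c with _ | ⟨ctx', P', Q'⟩
    · constructor
      · intro _ hsat
        exact (ih.1 hp) (fun l' hl' => hsat l' (List.mem_cons_of_mem _ hl'))
      · intro ctx P Q h
        exfalso
        simp only [parse, hp, Option.bind_none] at h
        exact nomatch h
    · have ihc := ih.2 ctx' P' Q' hp
      constructor
      · intro h hsat
        rcases hi : l.i with _ | i <;> rcases hj : l.j with _ | j <;>
          simp only [parse, hp, Option.bind_some, hi, hj] at h
        · -- none none: must be the if-none case
          have hvalA : l.Val (extOpt x a) ↔ (l.lo ≤ 0 ∧ 0 ≤ l.hi) := by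
            rw [hval, hi, hj]
            simp only [extOpt, Option.elim, sub_self]
            constructor
            · rintro ⟨h1, h2⟩; exact ⟨by exact_mod_cast h1, by exact_mod_cast h2⟩
            · rintro ⟨h1, h2⟩; exact ⟨by exact_mod_cast h1, by exact_mod_cast h2⟩
          split at h
          · exact nomatch h
          · rename_i hcond
            have hs := hsat l (List.mem_cons_self)
            rw [Lit.Sat] at hs
            apply hcond
            by_cases hA : (l.lo ≤ 0 ∧ 0 ≤ l.hi)
            · rw [decide_eq_true hA]
              cases hb2 : l.pos
              · have hneg : ¬(l.pos = true) := by rw [hb2]; simp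
                rw [if_neg hneg] at hs
                exact absurd (hvalA.2 hA) hs
              · rfl
            · rw [decide_eq_false hA]
              cases hb2 : l.pos
              · rfl
              · rw [if_pos hb2] at hs
                exact absurd (hvalA.1 hs) hA
        · split at h <;> exact nomatch h
        · split at h <;> exact nomatch h
        · exact nomatch h
      · intro ctx P Q h
        rw [hcsat]
        rcases hi : l.i with _ | i <;> rcases hj : l.j with _ | j <;>
          simp only [parse, hp, Option.bind_some, hi, hj] at h
        · -- none none
          have hvalA : l.Val (extOpt x a) ↔ (l.lo ≤ 0 ∧ 0 ≤ l.hi) := by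
            rw [hval, hi, hj]
            simp only [extOpt, Option.elim, sub_self]
            constructor
            · rintro ⟨h1, h2⟩; exact ⟨by exact_mod_cast h1, by exact_mod_cast h2⟩
            · rintro ⟨h1, h2⟩; exact ⟨by exact_mod_cast h1, by exact_mod_cast h2⟩
          split at h
          · rename_i hcond
            simp only [Option.some.injEq, Prod.mk.injEq] at h
            obtain ⟨rfl, rfl, rfl⟩ := h
            rw [ihc]
            have hsatl : l.Sat (extOpt x a) := by
              rw [Lit.Sat, hcond]
              by_cases hA : (l.lo ≤ 0 ∧ 0 ≤ l.hi)
              · rw [if_pos (by simp [hA])]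
                exact hvalA.2 hA
              · rw [if_neg (by simp [hA])]
                exact fun hv => hA (hvalA.1 hv)
            simp [hsatl]
          · exact nomatch h
        · -- i = none, j = some j : x j - a
          have hvalm : l.Val (extOpt x a) ↔ Mem x a (j, -l.hi, -l.lo) := by
            rw [hval, hi, hj]
            simp only [extOpt, Option.elim]
            constructor
            · rintro ⟨h1, h2⟩
              constructor
              · simp only [ivA]; push_cast; linarith
              · simp only [ivB]; push_cast; linarith
            · rintro ⟨h1, h2⟩
              simp only [ivA, ivB] at h1 h2
              push_cast at h1 h2
              constructor <;> linarith
          split at h <;> rename_i hb <;>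
            obtain ⟨rfl, rfl, rfl⟩ := by simpa [Prod.ext_iff] using h
          · rw [ihc, Lit.Sat, if_pos hb, hvalm]
            simp only [List.mem_cons, forall_eq_or_imp]
            tauto
          · rw [ihc, Lit.Sat, if_neg hb, hvalm]
            simp only [List.mem_cons, forall_eq_or_imp]
            tauto
        · -- i = some i, j = none : a - x i
          have hvalm : l.Val (extOpt x a) ↔ Mem x a (i, l.lo, l.hi) := by
            rw [hval, hi, hj]
            simp only [extOpt, Option.elim]
            constructor
            · rintro ⟨h1, h2⟩; exact ⟨by simp [ivA]; linarith, by simp [ivB]; linarith⟩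
            · rintro ⟨h1, h2⟩
              simp only [ivA, ivB] at h1 h2
              constructor <;> linarith
          split at h <;> rename_i hb <;>
            obtain ⟨rfl, rfl, rfl⟩ := by simpa [Prod.ext_iff] using h
          · rw [ihc, Lit.Sat, if_pos hb, hvalm]
            simp only [List.mem_cons, forall_eq_or_imp]
            tauto
          · rw [ihc, Lit.Sat, if_neg hb, hvalm]
            simp only [List.mem_cons, forall_eq_or_imp]
            tauto
        · -- both some
          obtain ⟨rfl, rfl, rfl⟩ := by simpa [Prod.ext_iff] using h
          have hsatl : l.Sat (extOpt x a) ↔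
              (Lit.Sat ⟨l.pos, i, j, l.lo, l.hi⟩ x) := by
            rw [Lit.Sat, Lit.Sat]
            have : l.Val (extOpt x a) ↔ (Lit.Val ⟨l.pos, i, j, l.lo, l.hi⟩ x) := by
              rw [hval, hi, hj]; exact Iff.rfl
            rw [this]
          rw [ihc, hsatl]
          simp only [CSat, List.mem_cons, forall_eq_or_imp]
          tauto

def moff (L : List (Iv γ)) : ℚ := L.foldr (fun iv m => max (max |iv.2.1| |iv.2.2|) m) 0

omit [DecidableEq γ] in
lemma moff_nonneg (L : List (Iv γ)) : 0 ≤ moff L := by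
  induction L with
  | nil => simp [moff]
  | cons iv L ih => simp only [moff, List.foldr_cons] at ih ⊢; positivity

omit [DecidableEq γ] in
lemma moff_le (L : List (Iv γ)) : ∀ iv ∈ L, |iv.2.1| ≤ moff L ∧ |iv.2.2| ≤ moff L := by
  induction L with
  | nil => simp
  | cons iv L ih =>
    intro iv' hiv'
    rcases List.mem_cons.1 hiv' with rfl | hiv'
    · constructor
      · simp only [moff, List.foldr_cons]
        exact le_max_of_le_left (le_max_left _ _)
      · simp only [moff, List.foldr_cons]
        exact le_max_of_le_left (le_max_right _ _)
    · obtain ⟨h1, h2⟩ := ih iv' hiv'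
      constructor
      · exact le_trans h1 (le_max_right _ _)
      · exact le_trans h2 (le_max_right _ _)

def nearLit (k₀ k : γ) (M : ℚ) : Lit γ := ⟨true, k₀, k, -M, M⟩

omit [DecidableEq γ] in
lemma sat_nearLit {k₀ k : γ} {M : ℚ} {x : γ → ℝ} :
    (nearLit k₀ k M).Sat x ↔ |x k - x k₀| ≤ (M : ℝ) := by
  rw [nearLit, Lit.Sat, if_pos rfl, Lit.Val, abs_le]
  push_cast
  exact Iff.rfl

/-- Translation of `x k + c ≤ x k' + c'` into literals, valid whenever both variables are
within distance `M` of a common reference point. -/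
def tLe (M : ℚ) (k : γ) (c : ℚ) (k' : γ) (c' : ℚ) : Dnf γ :=
  if k = k' then (if c ≤ c' then dTrue else dFalse)
  else dLit ⟨true, k, k', c - c', 2 * M⟩

def tLt (M : ℚ) (k : γ) (c : ℚ) (k' : γ) (c' : ℚ) : Dnf γ :=
  if k = k' then (if c < c' then dTrue else dFalse)
  else dAnd (dLit ⟨true, k, k', c - c', 2 * M⟩) (dLit ⟨false, k, k', c - c', c - c'⟩)

lemma tLe_correct {M : ℚ} {x : γ → ℝ} {k₀ : γ} {k k' : γ} {c c' : ℚ}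
    (hk : |x k - x k₀| ≤ (M : ℝ)) (hk' : |x k' - x k₀| ≤ (M : ℝ)) :
    DSat (tLe M k c k' c') x ↔ x k + (c : ℝ) ≤ x k' + (c' : ℝ) := by
  rw [tLe]
  rcases eq_or_ne k k' with rfl | hne
  · rw [if_pos rfl]
    rcases le_or_gt c c' with hc | hc
    · rw [if_pos hc]
      simp only [dsat_true, true_iff]
      have : (c : ℝ) ≤ (c' : ℝ) := by exact_mod_cast hc
      linarith
    · rw [if_neg (not_le.2 hc)]
      simp only [dsat_false, false_iff, not_le]
      have : (c' : ℝ) < (c : ℝ) := by exact_mod_cast hc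
      linarith
  · rw [if_neg hne, dsat_lit, Lit.Sat, if_pos rfl, Lit.Val]
    push_cast
    rw [abs_le] at hk hk'
    constructor
    · rintro ⟨h1, _⟩; linarith
    · intro h
      constructor
      · linarith
      · linarith

lemma tLt_correct {M : ℚ} {x : γ → ℝ} {k₀ : γ} {k k' : γ} {c c' : ℚ}
    (hk : |x k - x k₀| ≤ (M : ℝ)) (hk' : |x k' - x k₀| ≤ (M : ℝ)) :
    DSat (tLt M k c k' c') x ↔ x k + (c : ℝ) < x k' + (c' : ℝ) := by
  rw [tLt]
  rcases eq_or_ne k k' with rfl | hne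
  · rw [if_pos rfl]
    rcases lt_or_ge c c' with hc | hc
    · rw [if_pos hc]
      simp only [dsat_true, true_iff]
      have : (c : ℝ) < (c' : ℝ) := by exact_mod_cast hc
      linarith
    · rw [if_neg (not_lt.2 hc)]
      simp only [dsat_false, false_iff, not_lt]
      have : (c' : ℝ) ≤ (c : ℝ) := by exact_mod_cast hc
      linarith
  · rw [if_neg hne, dsat_and, dsat_lit, dsat_lit, Lit.Sat, Lit.Sat, if_pos rfl,
      if_neg (by simp), Lit.Val, Lit.Val]
    push_cast
    rw [abs_le] at hk hk'
    constructor
    · rintro ⟨⟨h1, _⟩, h2⟩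
      rcases lt_or_eq_of_le h1 with h | h
      · linarith
      · exact absurd ⟨le_of_eq h, le_of_eq h.symm⟩ h2
    · intro h
      refine ⟨⟨by linarith, by linarith⟩, ?_⟩
      rintro ⟨h1, h2⟩
      have : x k' - x k = (c : ℝ) - (c' : ℝ) := le_antisymm h2 h1
      linarith

def dMem (k : γ) (c : ℚ) (p : Iv γ) : Dnf γ :=
  dLit ⟨true, p.1, k, p.2.1 - c, p.2.2 - c⟩

def dNotMem (k : γ) (c : ℚ) (p : Iv γ) : Dnf γ :=
  dLit ⟨false, p.1, k, p.2.1 - c, p.2.2 - c⟩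

omit [DecidableEq γ] in
lemma dMem_correct {k : γ} {c : ℚ} {p : Iv γ} {x : γ → ℝ} :
    DSat (dMem k c p) x ↔ Mem x (x k + (c : ℝ)) p := by
  rw [dMem, dsat_lit, Lit.Sat, if_pos rfl, Lit.Val, Mem, ivA, ivB]
  push_cast
  constructor
  · rintro ⟨h1, h2⟩; constructor <;> linarith
  · rintro ⟨h1, h2⟩; constructor <;> linarith

omit [DecidableEq γ] in
lemma dNotMem_correct {k : γ} {c : ℚ} {p : Iv γ} {x : γ → ℝ} :
    DSat (dNotMem k c p) x ↔ ¬ Mem x (x k + (c : ℝ)) p := by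
  rw [dNotMem, dsat_lit, Lit.Sat, if_neg (by simp), Lit.Val, Mem, ivA, ivB]
  push_cast
  constructor
  · intro h hc
    exact h ⟨by linarith [hc.1], by linarith [hc.2]⟩
  · intro h hc
    exact h ⟨by linarith [hc.1], by linarith [hc.2]⟩

/-- DNF translation of the interval characterization. -/
def psiDnf (M : ℚ) (P₀ Q : List (Iv γ)) : Dnf γ :=
  dOr (dAny P₀ fun p => dAnd (dAll P₀ fun p' => tLe M p'.1 p'.2.1 p.1 p.2.1)
        (dAnd (dAll P₀ fun p' => tLe M p.1 p.2.1 p'.1 p'.2.2)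
              (dAll Q fun q => dNotMem p.1 p.2.1 q)))
  (dOr (dAny Q fun q => dAnd (dAll P₀ fun p => tLe M p.1 p.2.1 q.1 q.2.2)
        (dAnd (dAll P₀ fun p => tLt M q.1 q.2.2 p.1 p.2.2)
              (dAll Q fun q' => dOr (tLt M q.1 q.2.2 q'.1 q'.2.1) (tLe M q'.1 q'.2.2 q.1 q.2.2))))
       (dAny Q fun q => dAnd (dAll P₀ fun p => dMem q.1 q.2.2 p)
              (dAll Q fun q' => dNotMem q.1 q.2.2 q')))

lemma psiDnf_correct {M : ℚ} {x : γ → ℝ} {k₀ : γ} {P₀ Q : List (Iv γ)}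
    (hP : ∀ p ∈ P₀, |x p.1 - x k₀| ≤ (M : ℝ)) (hQ : ∀ q ∈ Q, |x q.1 - x k₀| ≤ (M : ℝ)) :
    DSat (psiDnf M P₀ Q) x ↔
      ((∃ p ∈ P₀, (∀ p' ∈ P₀, ivA x p' ≤ ivA x p) ∧
          (∀ p' ∈ P₀, ivA x p ≤ ivB x p') ∧ ∀ q ∈ Q, ¬ Mem x (ivA x p) q) ∨
        (∃ q ∈ Q, (∀ p ∈ P₀, ivA x p ≤ ivB x q) ∧
          (∀ p ∈ P₀, ivB x q < ivB x p) ∧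
          ∀ q' ∈ Q, (ivB x q < ivA x q' ∨ ivB x q' ≤ ivB x q)) ∨
        (∃ q ∈ Q, (∀ p ∈ P₀, Mem x (ivB x q) p) ∧
          ∀ q' ∈ Q, ¬ Mem x (ivB x q) q')) := by
  rw [psiDnf, dsat_or, dsat_or]
  refine or_congr ?_ (or_congr ?_ ?_)
  · rw [dsat_any]
    refine exists_congr fun p => and_congr_right fun hp => ?_
    rw [dsat_and, dsat_and, dsat_all, dsat_all, dsat_all]
    refine and_congr (forall₂_congr fun p' hp' => ?_)
      (and_congr (forall₂_congr fun p' hp' => ?_) (forall₂_congr fun q hq => ?_))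
    · exact tLe_correct (hP p' hp') (hP p hp)
    · exact tLe_correct (hP p hp) (hP p' hp')
    · exact dNotMem_correct
  · rw [dsat_any]
    refine exists_congr fun q => and_congr_right fun hq => ?_
    rw [dsat_and, dsat_and, dsat_all, dsat_all, dsat_all]
    refine and_congr (forall₂_congr fun p hp => ?_)
      (and_congr (forall₂_congr fun p hp => ?_) (forall₂_congr fun q' hq' => ?_))
    · exact tLe_correct (hP p hp) (hQ q hq)
    · exact tLt_correct (hQ q hq) (hP p hp)
    · rw [dsat_or]
      exact or_congr (tLt_correct (hQ q hq) (hQ q' hq')) (tLe_correct (hQ q' hq') (hQ q hq))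
  · rw [dsat_any]
    refine exists_congr fun q => and_congr_right fun hq => ?_
    rw [dsat_and, dsat_all, dsat_all]
    refine and_congr (forall₂_congr fun p hp => ?_) (forall₂_congr fun q' hq' => ?_)
    · exact dMem_correct
    · exact dNotMem_correct

omit [DecidableEq γ] in
lemma dsat_single {c : List (Lit γ)} {x : γ → ℝ} : DSat [c] x ↔ CSat c x := by
  simp [DSat]

omit [DecidableEq γ] in
lemma dsat_cons {c : List (Lit γ)} {D : Dnf γ} {x : γ → ℝ} :
    DSat (c :: D) x ↔ CSat c x ∨ DSat D x := by
  simp [DSat]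

def markings : List (Iv γ) → List (List (Iv γ × Bool))
  | [] => [ [] ]
  | q :: Q => (markings Q).flatMap fun m => [(q, true) :: m, (q, false) :: m]

omit [DecidableEq γ] in
lemma markings_map_mem (Q : List (Iv γ)) (f : Iv γ → Bool) :
    Q.map (fun q => (q, f q)) ∈ markings Q := by
  induction Q with
  | nil => simp [markings]
  | cons q Q ih =>
    simp only [markings, List.map_cons, List.mem_flatMap]
    refine ⟨Q.map (fun q => (q, f q)), ih, ?_⟩
    cases h : f q <;> simp [h]

omit [DecidableEq γ] in
lemma markings_cover {Q : List (Iv γ)} {m : List (Iv γ × Bool)} (hm : m ∈ markings Q) :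
    ∀ q ∈ Q, (q, true) ∈ m ∨ (q, false) ∈ m := by
  induction Q generalizing m with
  | nil => simp
  | cons q Q ih =>
    simp only [markings, List.mem_flatMap] at hm
    obtain ⟨m', hm', hmem⟩ := hm
    simp only [List.mem_cons, List.mem_singleton, List.not_mem_nil, or_false] at hmem
    intro q' hq'
    rcases List.mem_cons.1 hq' with rfl | hq'
    · rcases hmem with rfl | rfl
      · exact Or.inl (List.mem_cons_self)
      · exact Or.inr (List.mem_cons_self)
    · rcases ih hm' q' hq' with h | h
      · rcases hmem with rfl | rfl <;> exact Or.inl (List.mem_cons_of_mem _ h)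
      · rcases hmem with rfl | rfl <;> exact Or.inr (List.mem_cons_of_mem _ h)

omit [DecidableEq γ] in
lemma markings_sub {Q : List (Iv γ)} {m : List (Iv γ × Bool)} (hm : m ∈ markings Q) :
    ∀ qb ∈ m, qb.1 ∈ Q := by
  induction Q generalizing m with
  | nil => simp only [markings, List.mem_singleton] at hm; subst hm; simp
  | cons q Q ih =>
    simp only [markings, List.mem_flatMap] at hm
    obtain ⟨m', hm', hmem⟩ := hm
    simp only [List.mem_cons, List.mem_singleton, List.not_mem_nil, or_false] at hmem
    intro qb hqb
    rcases hmem with rfl | rfl <;> rcases List.mem_cons.1 hqb with rfl | hqb <;>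
      first
        | exact List.mem_cons_self
        | exact List.mem_cons_of_mem _ (ih hm' qb hqb)

def nears (m : List (Iv γ × Bool)) : List (Iv γ) :=
  m.filterMap fun qb => if qb.2 then some qb.1 else none

omit [DecidableEq γ] in
lemma mem_nears {m : List (Iv γ × Bool)} {q : Iv γ} : q ∈ nears m ↔ (q, true) ∈ m := by
  simp only [nears, List.mem_filterMap]
  constructor
  · rintro ⟨⟨q', b⟩, hmem, heq⟩
    cases b
    · simp at heq
    · simp only [if_pos] at heq
      obtain rfl : q' = q := by simpa using heq
      exact hmem
  · intro h
    exact ⟨(q, true), h, by simp⟩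

def patC (k₀ : γ) (M : ℚ) (m : List (Iv γ × Bool)) : List (Lit γ) :=
  m.map fun qb => if qb.2 then nearLit k₀ qb.1.1 M else (nearLit k₀ qb.1.1 M).neg

def pnC (k₀ : γ) (M : ℚ) (P₀ : List (Iv γ)) : List (Lit γ) :=
  P₀.map fun p => nearLit k₀ p.1 M

def elimPos (p₀ : Iv γ) (P Q : List (Iv γ)) : Dnf γ :=
  dAny (markings Q) fun m =>
    dAnd [patC p₀.1 (2 * moff ((p₀ :: P) ++ Q) + 1) m]
      (dAnd [pnC p₀.1 (2 * moff ((p₀ :: P) ++ Q) + 1) (p₀ :: P)]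
        (psiDnf (2 * moff ((p₀ :: P) ++ Q) + 1) (p₀ :: P) (nears m)))

lemma elimPos_correct (p₀ : Iv γ) (P Q : List (Iv γ)) (x : γ → ℝ) :
    DSat (elimPos p₀ P Q) x ↔
      ∃ a, (∀ p ∈ p₀ :: P, Mem x a p) ∧ (∀ q ∈ Q, ¬ Mem x a q) := by
  classical
  set M₀ := moff ((p₀ :: P) ++ Q) with hM₀def
  set M := 2 * M₀ + 1 with hMdef
  set k₀ := p₀.1 with hk₀
  have hM₀ : (0 : ℚ) ≤ M₀ := moff_nonneg _
  have hoff : ∀ iv ∈ (p₀ :: P) ++ Q, |(iv.2.1 : ℝ)| ≤ (M₀ : ℝ) ∧ |(iv.2.2 : ℝ)| ≤ (M₀ : ℝ) := by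
    intro iv hiv
    obtain ⟨h1, h2⟩ := moff_le _ iv hiv
    constructor
    · rw [← Rat.cast_abs]; exact_mod_cast h1
    · rw [← Rat.cast_abs]; exact_mod_cast h2
  have hMcast : (M : ℝ) = 2 * (M₀ : ℝ) + 1 := by rw [hMdef]; push_cast; ring
  have hp₀mem : p₀ ∈ (p₀ :: P) ++ Q := by simp
  -- key 1 : positive bases are near
  have key1 : ∀ a, Mem x a p₀ → ∀ p ∈ p₀ :: P, Mem x a p → |x p.1 - x k₀| ≤ (M : ℝ) := by
    intro a h0 p hp hmem
    obtain ⟨hA, hB⟩ := hmem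
    obtain ⟨hA0, hB0⟩ := h0
    have hop := hoff p (List.mem_append_left _ hp)
    have hop0 := hoff p₀ hp₀mem
    simp only [abs_le] at hop hop0 ⊢
    obtain ⟨⟨e1, e2⟩, ⟨e3, e4⟩⟩ := hop
    obtain ⟨⟨f1, f2⟩, ⟨f3, f4⟩⟩ := hop0
    simp only [ivA, ivB] at hA hB hA0 hB0
    rw [hMcast]
    constructor <;> linarith
  -- key 2 : far removal intervals are irrelevant
  have key2 : ∀ a q, Mem x a p₀ → q ∈ Q → ¬(|x q.1 - x k₀| ≤ (M : ℝ)) → ¬ Mem x a q := by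
    intro a q h0 hq hfar hmem
    apply hfar
    obtain ⟨hA, hB⟩ := hmem
    obtain ⟨hA0, hB0⟩ := h0
    have hop := hoff q (List.mem_append_right _ hq)
    have hop0 := hoff p₀ hp₀mem
    simp only [abs_le] at hop hop0 ⊢
    obtain ⟨⟨e1, e2⟩, ⟨e3, e4⟩⟩ := hop
    obtain ⟨⟨f1, f2⟩, ⟨f3, f4⟩⟩ := hop0
    simp only [ivA, ivB] at hA hB hA0 hB0
    rw [hMcast]
    constructor <;> linarith
  rw [elimPos, dsat_any]
  constructor
  · rintro ⟨m, hmQ, hsat⟩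
    rw [dsat_and, dsat_and, dsat_single, dsat_single] at hsat
    obtain ⟨hpat, hpn, hpsi⟩ := hsat
    have hnearP : ∀ p ∈ p₀ :: P, |x p.1 - x k₀| ≤ (M : ℝ) := by
      intro p hp
      have := hpn _ (List.mem_map.2 ⟨p, hp, rfl⟩)
      exact sat_nearLit.1 this
    have hnearN : ∀ q ∈ nears m, |x q.1 - x k₀| ≤ (M : ℝ) := by
      intro q hq
      have hqm : (q, true) ∈ m := mem_nears.1 hq
      have := hpat _ (List.mem_map.2 ⟨(q, true), hqm, rfl⟩)
      simp only [if_pos] at this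
      exact sat_nearLit.1 this
    have hfar : ∀ q, (q, false) ∈ m → ¬(|x q.1 - x k₀| ≤ (M : ℝ)) := by
      intro q hqm
      have := hpat _ (List.mem_map.2 ⟨(q, false), hqm, rfl⟩)
      simp only [Bool.false_eq_true, if_neg, if_false] at this
      rw [Lit.sat_neg, sat_nearLit] at this
      exact this
    have hpsi' := (psiDnf_correct hnearP hnearN).1 hpsi
    obtain ⟨a, hmem, hnot⟩ := (ne_char x p₀ P (nears m)).2 hpsi'
    refine ⟨a, hmem, fun q hq => ?_⟩
    rcases markings_cover hmQ q hq with h | h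
    · exact hnot q (mem_nears.2 h)
    · exact key2 a q (hmem p₀ (List.mem_cons_self)) hq (hfar q h)
  · rintro ⟨a, hmem, hnot⟩
    have hnearP : ∀ p ∈ p₀ :: P, |x p.1 - x k₀| ≤ (M : ℝ) :=
      fun p hp => key1 a (hmem p₀ (List.mem_cons_self)) p hp (hmem p hp)
    refine ⟨Q.map (fun q => (q, decide (|x q.1 - x k₀| ≤ (M : ℝ)))),
      markings_map_mem Q _, ?_⟩
    have hnearN : ∀ q ∈ nears (Q.map (fun q => (q, decide (|x q.1 - x k₀| ≤ (M : ℝ))))),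
        |x q.1 - x k₀| ≤ (M : ℝ) := by
      intro q hq
      have hqm := mem_nears.1 hq
      obtain ⟨q', _, heq⟩ := List.mem_map.1 hqm
      rw [Prod.mk.injEq] at heq
      obtain ⟨rfl, hd⟩ := heq
      exact of_decide_eq_true hd
    rw [dsat_and, dsat_and, dsat_single, dsat_single]
    refine ⟨?_, ?_, ?_⟩
    · intro l hl
      obtain ⟨⟨q, b⟩, hqb, rfl⟩ := List.mem_map.1 hl
      obtain ⟨q', hq', heq⟩ := List.mem_map.1 hqb
      obtain ⟨rfl, hb⟩ : q' = q ∧ b = decide (|x q'.1 - x k₀| ≤ (M : ℝ)) := by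
        have h1 := congrArg Prod.fst heq
        have h2 := congrArg Prod.snd heq
        simp at h1 h2
        exact ⟨h1, h2.symm⟩
      subst hb
      by_cases hc : |x q'.1 - x k₀| ≤ (M : ℝ)
      · simp only [decide_eq_true hc, if_pos]
        exact sat_nearLit.2 hc
      · simp only [decide_eq_false hc, Bool.false_eq_true, if_false]
        rw [Lit.sat_neg, sat_nearLit]
        exact hc
    · intro l hl
      obtain ⟨p, hp, rfl⟩ := List.mem_map.1 hl
      exact sat_nearLit.2 (hnearP p hp)
    · refine (psiDnf_correct hnearP hnearN).2 ?_
      refine (ne_char x p₀ P _).1 ⟨a, hmem, fun q hq => ?_⟩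
      have hqQ : q ∈ Q := by
        have := mem_nears.1 hq
        obtain ⟨q', hq', heq⟩ := List.mem_map.1 this
        have h1 := congrArg Prod.fst heq
        simp at h1
        rwa [← h1]
      exact hnot q hqQ

lemma exists_escape (Q : List (Iv γ)) (x : γ → ℝ) : ∃ a, ∀ q ∈ Q, ¬ Mem x a q := by
  rcases eq_or_ne Q [] with rfl | hne
  · exact ⟨0, by simp⟩
  · obtain ⟨q₀, hq₀, hmax⟩ := exists_max_mem Q hne (ivB x)
    refine ⟨ivB x q₀ + 1, fun q hq hmem => ?_⟩
    have := hmax q hq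
    have := hmem.2
    linarith

def elimClause (c : List (Lit (Option γ))) : Dnf γ :=
  match parse c with
  | none => dFalse
  | some (ctx, [], _) => [ctx]
  | some (ctx, p₀ :: P, Q) => dAnd [ctx] (elimPos p₀ P Q)

lemma elimClause_correct (c : List (Lit (Option γ))) (x : γ → ℝ) :
    DSat (elimClause c) x ↔ ∃ a, CSat c (extOpt x a) := by
  rcases hp : parse c with _ | ⟨ctx, P, Q⟩
  · rw [elimClause, hp]
    simp only [dsat_false, false_iff, not_exists]
    exact fun a => (parse_correct c x a).1 hp
  · rcases P with _ | ⟨p₀, P⟩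
    · rw [elimClause, hp, dsat_single]
      constructor
      · intro hctx
        obtain ⟨a, ha⟩ := exists_escape Q x
        exact ⟨a, ((parse_correct c x a).2 ctx [] Q hp).2 ⟨hctx, by simp, ha⟩⟩
      · rintro ⟨a, hsat⟩
        exact (((parse_correct c x a).2 ctx [] Q hp).1 hsat).1
    · rw [elimClause, hp, dsat_and, dsat_single, elimPos_correct]
      constructor
      · rintro ⟨hctx, a, hmem, hnot⟩
        exact ⟨a, ((parse_correct c x a).2 ctx (p₀ :: P) Q hp).2 ⟨hctx, hmem, hnot⟩⟩
      · rintro ⟨a, hsat⟩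
        obtain ⟨hctx, hmem, hnot⟩ := ((parse_correct c x a).2 ctx (p₀ :: P) Q hp).1 hsat
        exact ⟨hctx, a, hmem, hnot⟩

def elimDnf (D : Dnf (Option γ)) : Dnf γ := D.flatMap elimClause

lemma elimDnf_correct (D : Dnf (Option γ)) (x : γ → ℝ) :
    DSat (elimDnf D) x ↔ ∃ a, DSat D (extOpt x a) := by
  induction D with
  | nil => simp [elimDnf, DSat]
  | cons c D ih =>
    have : elimDnf (c :: D) = dOr (elimClause c) (elimDnf D) := by
      simp [elimDnf, dOr]
    rw [this, dsat_or, ih, elimClause_correct]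
    constructor
    · rintro (⟨a, ha⟩ | ⟨a, ha⟩)
      · exact ⟨a, dsat_cons.2 (Or.inl ha)⟩
      · exact ⟨a, dsat_cons.2 (Or.inr ha)⟩
    · rintro ⟨a, ha⟩
      rcases dsat_cons.1 ha with h | h
      · exact Or.inl ⟨a, h⟩
      · exact Or.inr ⟨a, h⟩

end Elim

section L1
open FirstOrder Language

-- `L1` has: Functions 1 = ℚ, Relations 2 = {r : ℚ // 0 < r}, all else Empty.

lemma term_eval {β : Type*} (t : L1.Term β) :
    ∃ (i : β) (c : ℚ), ∀ x : β → ℝ, t.realize x = x i + (c : ℝ) := by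
  induction t with
  | var i => exact ⟨i, 0, fun x => by simp⟩
  | @func l f ts ih =>
    match l, f, ts, ih with
    | 1, s, ts, ih =>
      obtain ⟨i, c, h⟩ := ih 0
      refine ⟨i, c + (id s : ℚ), fun x => ?_⟩
      have : Term.realize x (Term.func (L := L1) s ts) =
          Term.realize x (ts 0) + ((id s : ℚ) : ℝ) := rfl
      rw [this, h]
      push_cast
      ring
    | 0, f, _, _ => nomatch f
    | (l + 2), f, _, _ => nomatch f

lemma qf_to_dnf {α : Type*} {m : ℕ} (φ : L1.BoundedFormula α m) (h : φ.IsQF) :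
    ∃ D : Dnf (α ⊕ Fin m), ∀ (v : α → ℝ) (xs : Fin m → ℝ),
      φ.Realize v xs ↔ DSat D (Sum.elim v xs) := by
  induction h with
  | falsum =>
    refine ⟨dFalse, fun v xs => ?_⟩
    rw [dsat_false, iff_false]
    exact fun h => h
  | of_isAtomic h =>
    cases h with
    | equal t₁ t₂ =>
      obtain ⟨i₁, c₁, h₁⟩ := term_eval t₁
      obtain ⟨i₂, c₂, h₂⟩ := term_eval t₂
      refine ⟨dLit ⟨true, i₁, i₂, c₁ - c₂, c₁ - c₂⟩, fun v xs => ?_⟩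
      rw [BoundedFormula.realize_bdEqual, h₁, h₂, dsat_lit, Lit.Sat, if_pos rfl, Lit.Val]
      push_cast
      constructor
      · intro h; constructor <;> linarith
      · rintro ⟨ha, hb⟩; linarith
    | @rel l R ts =>
      match l, R, ts with
      | 2, R, ts =>
        obtain ⟨i₀, c₀, h₀⟩ := term_eval (ts 0)
        obtain ⟨i₁, c₁, h₁⟩ := term_eval (ts 1)
        refine ⟨dLit ⟨true, i₀, i₁, c₀ - c₁, c₀ - c₁ + R.val⟩, fun v xs => ?_⟩
        rw [BoundedFormula.realize_rel, dsat_lit, Lit.Sat, if_pos rfl, Lit.Val]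
        have hR : Structure.RelMap (M := ℝ) R (fun i => Term.realize (Sum.elim v xs) (ts i)) ↔
            (0 ≤ Term.realize (Sum.elim v xs) (ts 1) - Term.realize (Sum.elim v xs) (ts 0) ∧
              Term.realize (Sum.elim v xs) (ts 1) - Term.realize (Sum.elim v xs) (ts 0) ≤
                ((R.val : ℚ) : ℝ)) := Iff.rfl
        rw [hR, h₀, h₁]
        push_cast
        constructor
        · rintro ⟨ha, hb⟩; constructor <;> linarith
        · rintro ⟨ha, hb⟩; constructor <;> linarith
      | 0, R, _ => nomatch R
      | 1, R, _ => nomatch R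
      | (l + 3), R, _ => nomatch R
  | imp h₁ h₂ ih₁ ih₂ =>
    obtain ⟨D₁, hD₁⟩ := ih₁
    obtain ⟨D₂, hD₂⟩ := ih₂
    refine ⟨dOr (dNot D₁) D₂, fun v xs => ?_⟩
    rw [BoundedFormula.realize_imp, dsat_or, dsat_not, hD₁, hD₂, imp_iff_not_or]

/-- Translate a literal into a quantifier-free `L1`-formula. -/
def litToBF {α : Type*} {m : ℕ} (l : Lit (α ⊕ Fin m)) : L1.BoundedFormula α m :=
  let t₁ : L1.Term (α ⊕ Fin m) :=
    Term.func (l := 1) (l.lo : L1.Functions 1) ![Term.var l.i]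
  let t₂ : L1.Term (α ⊕ Fin m) := Term.var l.j
  let base : L1.BoundedFormula α m :=
    if h : l.lo < l.hi then
      Relations.boundedFormula (L := L1) (n := 2)
        (⟨l.hi - l.lo, sub_pos.2 h⟩ : {r : ℚ // 0 < r}) ![t₁, t₂]
    else if l.lo = l.hi then t₁.bdEqual t₂
    else ⊥
  if l.pos then base else base.not

lemma litToBF_isQF {α : Type*} {m : ℕ} (l : Lit (α ⊕ Fin m)) : (litToBF l).IsQF := by
  rw [litToBF]
  have hbase : ∀ b : L1.BoundedFormula α m,
      (b = (if h : l.lo < l.hi then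
        Relations.boundedFormula (L := L1) (n := 2)
          (⟨l.hi - l.lo, sub_pos.2 h⟩ : {r : ℚ // 0 < r})
          ![Term.func (l := 1) (l.lo : L1.Functions 1) ![Term.var l.i], Term.var l.j]
      else if l.lo = l.hi then
        (Term.func (l := 1) (l.lo : L1.Functions 1) ![Term.var l.i]).bdEqual (Term.var l.j)
      else ⊥)) → b.IsQF := by
    intro b hb
    subst hb
    split
    · exact (BoundedFormula.IsAtomic.rel _ _).isQF
    · split
      · exact (BoundedFormula.IsAtomic.equal _ _).isQF
      · exact BoundedFormula.isQF_bot
  cases l.pos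
  · simp only [Bool.false_eq_true, if_false]
    exact (hbase _ rfl).not
  · simp only [if_true]
    exact hbase _ rfl

lemma litToBF_realize {α : Type*} {m : ℕ} (l : Lit (α ⊕ Fin m)) (v : α → ℝ) (xs : Fin m → ℝ) :
    (litToBF l).Realize v xs ↔ l.Sat (Sum.elim v xs) := by
  rw [litToBF]
  set y := Sum.elim v xs with hy
  have ht₁ : Term.realize y (Term.func (L := L1) (l := 1) (l.lo : L1.Functions 1) ![Term.var l.i]) =
      y l.i + (l.lo : ℝ) := rfl
  have hbase :
      ((if h : l.lo < l.hi then
        Relations.boundedFormula (L := L1) (n := 2)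
          (⟨l.hi - l.lo, sub_pos.2 h⟩ : {r : ℚ // 0 < r})
          ![Term.func (l := 1) (l.lo : L1.Functions 1) ![Term.var l.i], Term.var l.j]
      else if l.lo = l.hi then
        (Term.func (l := 1) (l.lo : L1.Functions 1) ![Term.var l.i]).bdEqual (Term.var l.j)
      else ⊥ : L1.BoundedFormula α m)).Realize v xs ↔ l.Val y := by
    split
    · rename_i h
      show (0 ≤ y l.j - (y l.i + (l.lo : ℝ)) ∧
          y l.j - (y l.i + (l.lo : ℝ)) ≤ ((l.hi - l.lo : ℚ) : ℝ)) ↔ l.Val y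
      rw [Lit.Val]
      push_cast
      constructor
      · rintro ⟨ha, hb⟩; constructor <;> linarith
      · rintro ⟨ha, hb⟩; constructor <;> linarith
    · split
      · rename_i h
        rw [BoundedFormula.realize_bdEqual, ht₁, Lit.Val]
        have : Term.realize y (Term.var (L := L1) l.j) = y l.j := rfl
        rw [this, ← h]
        have hc : (l.lo : ℝ) = (l.hi : ℝ) := by exact_mod_cast h
        constructor
        · intro he; constructor <;> linarith
        · rintro ⟨ha, hb⟩; linarith
      · rename_i h1 h2
        rw [BoundedFormula.realize_bot, Lit.Val]
        have hlt : (l.hi : ℝ) < (l.lo : ℝ) := by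
          have := lt_of_le_of_ne (not_lt.1 h1) (Ne.symm h2)
          exact_mod_cast this
        constructor
        · exact False.elim
        · rintro ⟨ha, hb⟩; linarith
  rw [Lit.Sat]
  cases hb : l.pos
  · simp only [Bool.false_eq_true, if_false]
    rw [BoundedFormula.realize_not, hbase]
  · simp only [if_true]
    rw [hbase]

def cToBF {α : Type*} {m : ℕ} (c : List (Lit (α ⊕ Fin m))) : L1.BoundedFormula α m :=
  c.foldr (fun l ψ => litToBF l ⊓ ψ) ⊤

lemma cToBF_isQF {α : Type*} {m : ℕ} (c : List (Lit (α ⊕ Fin m))) : (cToBF c).IsQF := by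
  induction c with
  | nil => exact BoundedFormula.IsQF.top
  | cons l c ih => exact (litToBF_isQF l).inf ih

lemma cToBF_realize {α : Type*} {m : ℕ} (c : List (Lit (α ⊕ Fin m))) (v : α → ℝ)
    (xs : Fin m → ℝ) : (cToBF c).Realize v xs ↔ CSat c (Sum.elim v xs) := by
  induction c with
  | nil => simp [cToBF, CSat]
  | cons l c ih =>
    have : cToBF (l :: c) = litToBF l ⊓ cToBF c := rfl
    rw [this, BoundedFormula.realize_inf, ih, litToBF_realize]
    simp [CSat]

def dToBF {α : Type*} {m : ℕ} (D : Dnf (α ⊕ Fin m)) : L1.BoundedFormula α m :=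
  D.foldr (fun c ψ => cToBF c ⊔ ψ) ⊥

lemma dToBF_isQF {α : Type*} {m : ℕ} (D : Dnf (α ⊕ Fin m)) : (dToBF D).IsQF := by
  induction D with
  | nil => exact BoundedFormula.isQF_bot
  | cons c D ih => exact (cToBF_isQF c).sup ih

lemma dToBF_realize {α : Type*} {m : ℕ} (D : Dnf (α ⊕ Fin m)) (v : α → ℝ)
    (xs : Fin m → ℝ) : (dToBF D).Realize v xs ↔ DSat D (Sum.elim v xs) := by
  induction D with
  | nil => simp [dToBF, DSat]
  | cons c D ih =>
    have : dToBF (c :: D) = cToBF c ⊔ dToBF D := rfl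
    rw [this, BoundedFormula.realize_sup, ih, cToBF_realize, dsat_cons]

lemma dsat_relabel {γ δ : Type*} (f : γ → δ) (D : Dnf γ) (y : δ → ℝ) :
    DSat (D.map (List.map (Lit.relabel f))) y ↔ DSat D (y ∘ f) := by
  constructor
  · rintro ⟨c, hc, hsat⟩
    obtain ⟨c₀, hc₀, rfl⟩ := List.mem_map.1 hc
    refine ⟨c₀, hc₀, fun l hl => ?_⟩
    exact (Lit.sat_relabel f l y).1 (hsat _ (List.mem_map.2 ⟨l, hl, rfl⟩))
  · rintro ⟨c, hc, hsat⟩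
    refine ⟨c.map (Lit.relabel f), List.mem_map.2 ⟨c, hc, rfl⟩, fun l hl => ?_⟩
    obtain ⟨l₀, hl₀, rfl⟩ := List.mem_map.1 hl
    exact (Lit.sat_relabel f l₀ y).2 (hsat l₀ hl₀)

/-- Quantifier elimination for bounded formulas over `ℝ`. -/
theorem bf_qe {n : ℕ} {k : ℕ} (φ : L1.BoundedFormula (Fin n) k) :
    ∃ ψ : L1.BoundedFormula (Fin n) k, ψ.IsQF ∧
      ∀ (v : Fin n → ℝ) (xs : Fin k → ℝ), φ.Realize v xs ↔ ψ.Realize v xs := by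
  induction φ with
  | falsum => exact ⟨⊥, BoundedFormula.isQF_bot, fun _ _ => Iff.rfl⟩
  | equal t₁ t₂ => exact ⟨_, (BoundedFormula.IsAtomic.equal t₁ t₂).isQF, fun _ _ => Iff.rfl⟩
  | rel R ts => exact ⟨_, (BoundedFormula.IsAtomic.rel R ts).isQF, fun _ _ => Iff.rfl⟩
  | imp φ₁ φ₂ ih₁ ih₂ =>
    obtain ⟨ψ₁, hq₁, h₁⟩ := ih₁
    obtain ⟨ψ₂, hq₂, h₂⟩ := ih₂
    exact ⟨ψ₁.imp ψ₂, hq₁.imp hq₂, fun v xs => by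
      rw [BoundedFormula.realize_imp, BoundedFormula.realize_imp, h₁, h₂]⟩
  | @all k φ' ih =>
    obtain ⟨χ, hχqf, hχ⟩ := ih
    obtain ⟨D, hD⟩ := qf_to_dnf χ.not hχqf.not
    let e : (Fin n ⊕ Fin (k + 1)) → Option (Fin n ⊕ Fin k) := fun s =>
      match s with
      | Sum.inl i => some (Sum.inl i)
      | Sum.inr j => if h : (j : ℕ) < k then some (Sum.inr ⟨j, h⟩) else none
    let D' : Dnf (Option (Fin n ⊕ Fin k)) := D.map (List.map (Lit.relabel e))
    refine ⟨(dToBF (elimDnf D')).not, (dToBF_isQF _).not, fun v xs => ?_⟩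
    rw [BoundedFormula.realize_all, BoundedFormula.realize_not, dToBF_realize,
      elimDnf_correct]
    have hfun : ∀ a : ℝ, (extOpt (Sum.elim v xs) a) ∘ e = Sum.elim v (Fin.snoc xs a) := by
      intro a
      funext s
      cases s with
      | inl i => rfl
      | inr j =>
        by_cases h : (j : ℕ) < k
        · simp only [e, Function.comp_apply, dif_pos h, extOpt, Option.elim]
          rw [Sum.elim_inr, Sum.elim_inr, Fin.snoc]
          simp only [h, dif_pos]
          rfl
        · simp only [e, Function.comp_apply, dif_neg h, extOpt, Option.elim]
          rw [Sum.elim_inr, Fin.snoc]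
          simp [h]
    constructor
    · intro hall ⟨a, haD⟩
      rw [dsat_relabel, hfun a] at haD
      rw [← hD v (Fin.snoc xs a), BoundedFormula.realize_not] at haD
      exact haD ((hχ v (Fin.snoc xs a)).1 (hall a))
    · intro hne a
      rw [hχ v (Fin.snoc xs a)]
      by_contra hcon
      apply hne
      refine ⟨a, ?_⟩
      rw [dsat_relabel, hfun a, ← hD v (Fin.snoc xs a), BoundedFormula.realize_not]
      intro hc
      exact hcon hc

lemma sentence_key {n : ℕ} (φ ψ : L1.Formula (Fin n)) (N : Type*) [L1.Structure N] :
    (N ⊨ (BoundedFormula.relabel Sum.inr (φ.iff ψ)).alls) ↔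
      ∀ w : Fin n → N, (φ.Realize w ↔ ψ.Realize w) := by
  rw [Sentence.Realize, BoundedFormula.realize_alls]
  refine forall_congr' fun w => ?_
  rw [Formula.realize_relabel_sumInr]
  exact Formula.realize_iff

end L1
end QE1

/-- The complete theory of `(ℝ; (f_s)_{s∈ℚ}, (R_r)_{r∈ℚ⁺})` has quantifier elimination: every
formula is equivalent, in `ℝ` and in every model of `Th(ℝ)`, to a quantifier-free formula. -/
theorem statement7 (n : ℕ) (φ : L1.Formula (Fin n)) :
    ∃ ψ : L1.Formula (Fin n), FirstOrder.Language.BoundedFormula.IsQF ψ ∧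
      (∀ v : Fin n → ℝ, φ.Realize v ↔ ψ.Realize v) ∧
      ∀ (M : Type w) [L1.Structure M],
        M ⊨ L1.completeTheory ℝ → ∀ v : Fin n → M, φ.Realize v ↔ ψ.Realize v := by
  obtain ⟨ψ, hqf, h⟩ := QE1.bf_qe (k := 0) φ
  have hℝ : ∀ v : Fin n → ℝ, φ.Realize v ↔ FirstOrder.Language.Formula.Realize ψ v := by
    intro v
    unfold FirstOrder.Language.Formula.Realize
    exact h v _
  refine ⟨ψ, hqf, hℝ, ?_⟩
  intro M _ hMod v
  have hσ : (FirstOrder.Language.BoundedFormula.relabel Sum.inr (φ.iff ψ)).alls ∈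
      L1.completeTheory ℝ :=
    FirstOrder.Language.mem_completeTheory.2 ((QE1.sentence_key φ ψ ℝ).2 hℝ)
  haveI := hMod
  have hs := FirstOrder.Language.Theory.realize_sentence_of_mem (M := M)
    (L1.completeTheory ℝ) hσ
  exact (QE1.sentence_key φ ψ M).1 hs v
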